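/- Let (F, θ) be an ID-field of characteristic p > 0 with θ non-degenerate. Then for each ℓ, the map θ^(p^ℓ) restricted to F_ℓ is an F_{ℓ+1}-linear endomorphism of F_ℓ which is nilpotent of nilpotence order p (i.e. (θ^(p^ℓ))^p = 0 on F_ℓ but (θ^(p^ℓ))^{p-1} ≠ 0), with kernel equal to F_{ℓ+1}; consequently [F_ℓ : F_{ℓ+1}] = p. -/

import Mathlib

/-- The `i`-th component `θ^(i)` of a map `θ : R → R[[T]]`. -/
noncomputable def iterDeriv {R : Type*} [CommRing R] (θ : R →+* PowerSeries R) (i : ℕ) (r : R) : R :=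
  PowerSeries.coeff (R := R) i (θ r)

/-- `θ` is an iterative derivation: `θ^(0) = id` and
`θ^(i) ∘ θ^(j) = binom(i+j, i) · θ^(i+j)`. -/
def IsIterativeDerivation {R : Type*} [CommRing R] (θ : R →+* PowerSeries R) : Prop :=
  (∀ r, iterDeriv θ 0 r = r) ∧
  ∀ i j r, iterDeriv θ i (iterDeriv θ j r) = (i + j).choose i • iterDeriv θ (i + j) r

/-!
On `F_ℓ` the operator `θ^(p^ℓ)` is a derivation over `F_{ℓ+1}`: in the Leibniz sum the terms
`θ^(i) x · θ^(p^ℓ - i) y` with `0 < i < p^ℓ` vanish. By Lucas' theorem its `k`-th iterate is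
`k! θ^(k p^ℓ)`, so its `p`-th power is zero and its kernel on `F_ℓ` is `F_{ℓ+1}`; it is
nonzero because `θ^(p^ℓ)(x^{p^ℓ}) = (θ^(1) x)^{p^ℓ}`.

A nonzero nilpotent derivation `D` of a field `K` whose kernel is the subfield `E` has an
element `t` with `D t = 1`. If moreover `D^p = 0` in characteristic `p`, then `1, t, …, t^{p-1}`
is an `E`-basis of `K`, because `D^m t^m = m!` and `D^m` kills `t^i` for `i < m`; in particular
`[K : E] = p` and `D^{p-1} t^{p-1} = (p-1)! ≠ 0`.
-/

open Module Nat PowerSeries Finset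

theorem CharP.natCast_factorial_ne_zero {K : Type*} [AddMonoidWithOne K] (p : ℕ) [Fact p.Prime]
    [CharP K p] {n : ℕ} (hn : n < p) : (n ! : K) ≠ 0 := by
  rw [Ne, CharP.cast_eq_zero_iff K p, (Fact.out : p.Prime).dvd_factorial]
  exact hn.not_ge

theorem Set.range_pow_fin_succ {M : Type*} [Monoid M] (t : M) (m : ℕ) :
    Set.range (fun i : Fin (m + 1) ↦ t ^ (i : ℕ)) =
      insert (t ^ m) (Set.range fun i : Fin m ↦ t ^ (i : ℕ)) := by
  rw [← Fin.snoc_init_self (fun i : Fin (m + 1) ↦ t ^ (i : ℕ)), Fin.range_snoc]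
  rfl

namespace Derivation

variable {E K : Type*} [Field E] [Field K] [Algebra E K] (D : Derivation E K K)

/-- Go down the chain `y, D y, D² y, …` to the last element `u` with `D u ≠ 0`; then `D u` is a
nonzero constant and `t = u / D u` works. -/
theorem exists_apply_eq_one (hnil : IsNilpotent (D : End E K)) (hD : D ≠ 0)
    (hker : ∀ x, D x = 0 → x ∈ Set.range (algebraMap E K)) : ∃ t, D t = 1 := by
  obtain ⟨n, hn⟩ := hnil
  obtain ⟨y, hy⟩ : ∃ y, D y ≠ 0 := by
    by_contra! h
    exact hD (Derivation.ext h)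
  have hyn : ((D : End E K) ^ n) y = 0 := by rw [hn]; rfl
  clear hn
  induction n generalizing y with
  | zero => exact (hy (by rw [show y = 0 by simpa using hyn, map_zero])).elim
  | succ n ih =>
    by_cases hDDy : D (D y) = 0
    · obtain ⟨c, hc⟩ := hker _ hDDy
      have hc0 : c ≠ 0 := by rintro rfl; exact hy (by simp [← hc])
      refine ⟨c⁻¹ • y, ?_⟩
      rw [D.map_smul, ← hc, Algebra.smul_def, map_inv₀, inv_mul_cancel₀ (by simpa using hc0)]
    · exact ih (D y) hDDy (by rwa [pow_succ, End.mul_apply] at hyn)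

variable {D} {t : K}

theorem iterate_apply_pow (ht : D t = 1) (i j : ℕ) :
    (⇑D)^[j] (t ^ i) = i.descFactorial j • t ^ (i - j) := by
  induction j with
  | zero => simp
  | succ j ih =>
    rw [Function.iterate_succ_apply', ih, map_nsmul, leibniz_pow, ht, smul_eq_mul, mul_one,
      smul_smul, Nat.sub_sub, descFactorial_succ, mul_comm]

theorem span_pow_le_ker_pow (ht : D t = 1) (m : ℕ) :
    Submodule.span E (Set.range fun i : Fin m ↦ t ^ (i : ℕ)) ≤
      LinearMap.ker ((D : End E K) ^ m) := by
  rw [Submodule.span_le]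
  rintro _ ⟨i, rfl⟩
  simp [End.pow_apply, iterate_apply_pow ht, descFactorial_eq_zero_iff_lt.mpr i.isLt]

theorem pow_apply_pow_self (ht : D t = 1) (m : ℕ) : ((D : End E K) ^ m) (t ^ m) = m ! := by
  simp [End.pow_apply, iterate_apply_pow ht, descFactorial_self]

variable (p : ℕ) [Fact p.Prime] [CharP K p]

theorem ker_pow_le_span_pow (ht : D t = 1)
    (hker : ∀ x, D x = 0 → x ∈ Set.range (algebraMap E K)) {m : ℕ} (hm : m ≤ p) :
    LinearMap.ker ((D : End E K) ^ m) ≤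
      Submodule.span E (Set.range fun i : Fin m ↦ t ^ (i : ℕ)) := by
  induction m with
  | zero => simp [End.one_eq_id]
  | succ m ih =>
    intro x hx
    rw [LinearMap.mem_ker, _root_.pow_succ', End.mul_apply, coeFn_coe] at hx
    obtain ⟨c, hc⟩ := hker _ hx
    rw [Set.range_pow_fin_succ, Submodule.mem_span_insert']
    refine ⟨-(c / m !), ih (by omega) ?_⟩
    rw [LinearMap.mem_ker, map_add, _root_.map_smul, pow_apply_pow_self ht, ← hc,
      Algebra.smul_def, map_neg, map_div₀, _root_.map_natCast, neg_mul,
      div_mul_cancel₀ _ (CharP.natCast_factorial_ne_zero p (show m < p by omega)), add_neg_cancel]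

theorem linearIndependent_pow (ht : D t = 1) {m : ℕ} (hm : m ≤ p) :
    LinearIndependent E (fun i : Fin m ↦ t ^ (i : ℕ)) := by
  induction m with
  | zero => exact linearIndependent_empty_type
  | succ m ih =>
    rw [← Fin.snoc_init_self (fun i : Fin (m + 1) ↦ t ^ (i : ℕ)), linearIndependent_finSnoc]
    refine ⟨ih (by omega), fun hmem => ?_⟩
    have hker := span_pow_le_ker_pow ht m hmem
    rw [Fin.val_last, LinearMap.mem_ker, pow_apply_pow_self ht] at hker
    exact CharP.natCast_factorial_ne_zero p (show m < p by omega) hker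

theorem finrank_eq_of_pow_eq_zero (hD : D ≠ 0) (hnil : (D : End E K) ^ p = 0)
    (hker : ∀ x, D x = 0 → x ∈ Set.range (algebraMap E K)) : finrank E K = p := by
  obtain ⟨t, ht⟩ := D.exists_apply_eq_one ⟨p, hnil⟩ hD hker
  have hspan : ⊤ ≤ Submodule.span E (Set.range fun i : Fin p ↦ t ^ (i : ℕ)) := by
    simpa [hnil] using ker_pow_le_span_pow p ht hker le_rfl
  simpa using finrank_eq_card_basis (Basis.mk (linearIndependent_pow p ht le_rfl) hspan)

theorem pow_sub_one_ne_zero (hD : D ≠ 0) (hnil : IsNilpotent (D : End E K))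
    (hker : ∀ x, D x = 0 → x ∈ Set.range (algebraMap E K)) :
    (D : End E K) ^ (p - 1) ≠ 0 := by
  obtain ⟨t, ht⟩ := D.exists_apply_eq_one hnil hD hker
  intro h
  have h' := pow_apply_pow_self ht (p - 1)
  rw [h, LinearMap.zero_apply] at h'
  exact CharP.natCast_factorial_ne_zero p (Nat.sub_lt (Fact.out : p.Prime).pos one_pos) h'.symm

end Derivation

theorem Choose.choose_pow_mul_add_modEq_one {p : ℕ} [Fact p.Prime] {ℓ a b : ℕ}
    (hb : b < p ^ ℓ) :
    (p ^ ℓ * a + b).choose (p ^ ℓ * a) ≡ 1 [MOD p] := by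
  induction ℓ generalizing b with
  | zero =>
    obtain rfl : b = 0 := by simpa using hb
    simp [Nat.ModEq.refl]
  | succ ℓ ih =>
    have hp := (Fact.out : p.Prime).pos
    have hn : p ^ (ℓ + 1) * a + b = b % p + p * (p ^ ℓ * a + b / p) := by
      rw [pow_succ', mul_assoc, mul_add, add_comm (b % p), add_assoc, Nat.div_add_mod]
    have hk : p ^ (ℓ + 1) * a = p * (p ^ ℓ * a) := by rw [pow_succ', mul_assoc]
    have hbp : b / p < p ^ ℓ := Nat.div_lt_of_lt_mul (by rwa [← pow_succ'])
    have := Choose.choose_modEq_choose_mod_mul_choose_div_nat (p := p)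
      (n := p ^ (ℓ + 1) * a + b) (k := p ^ (ℓ + 1) * a)
    rw [hn, hk] at this ⊢
    simp only [Nat.add_mul_mod_self_left, Nat.mod_mod, Nat.mul_mod_right, Nat.choose_zero_right,
      one_mul, Nat.add_mul_div_left _ _ hp, Nat.div_eq_of_lt (Nat.mod_lt b hp), zero_add,
      Nat.mul_div_cancel_left _ hp] at this
    exact this.trans (ih hbp)

theorem PowerSeries.coeff_pow_expChar_pow {R : Type*} [CommRing R] (p : ℕ) [ExpChar R p]
    (f : PowerSeries R) (n j : ℕ) :
    coeff j (f ^ p ^ n) = if p ^ n ∣ j then coeff (j / p ^ n) f ^ p ^ n else 0 := by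
  rw [← MvPowerSeries.map_iterateFrobenius_expand p (expChar_ne_zero R p) f n]
  change coeff j (map (iterateFrobenius R p n) (expand (p ^ n) _ f)) = _
  rw [coeff_map, coeff_expand]
  split_ifs <;> simp [iterateFrobenius_def, expChar_ne_zero R p]

section
variable {R : Type*} [CommRing R] (θ : R →+* PowerSeries R)

theorem iterDeriv_add (i : ℕ) (x y : R) :
    iterDeriv θ i (x + y) = iterDeriv θ i x + iterDeriv θ i y := by
  simp [iterDeriv]

theorem iterDeriv_neg (i : ℕ) (x : R) : iterDeriv θ i (-x) = -iterDeriv θ i x := by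
  simp [iterDeriv]

@[simp] theorem iterDeriv_zero_right (i : ℕ) : iterDeriv θ i 0 = 0 := by simp [iterDeriv]

theorem iterDeriv_one_right {i : ℕ} (hi : i ≠ 0) : iterDeriv θ i 1 = 0 := by
  simp [iterDeriv, coeff_one, hi]

theorem iterDeriv_mul (n : ℕ) (x y : R) :
    iterDeriv θ n (x * y) = ∑ q ∈ antidiagonal n, iterDeriv θ q.1 x * iterDeriv θ q.2 y := by
  simp [iterDeriv, coeff_mul]

theorem iterDeriv_natCast_mul (i n : ℕ) (x : R) :
    iterDeriv θ i (n * x) = n * iterDeriv θ i x := by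
  rw [iterDeriv, iterDeriv, map_mul, map_natCast, ← map_natCast (C (R := R)), coeff_C_mul]

theorem iterDeriv_pow_expChar_pow (p : ℕ) [ExpChar R p] (n j : ℕ) (x : R) :
    iterDeriv θ j (x ^ p ^ n) = if p ^ n ∣ j then iterDeriv θ (j / p ^ n) x ^ p ^ n else 0 := by
  simp only [iterDeriv, map_pow, coeff_pow_expChar_pow]

theorem iterDeriv_pow_self (p : ℕ) [ExpChar R p] (ℓ : ℕ) (x : R) :
    iterDeriv θ (p ^ ℓ) (x ^ p ^ ℓ) = iterDeriv θ 1 x ^ p ^ ℓ := by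
  rw [iterDeriv_pow_expChar_pow, if_pos dvd_rfl, Nat.div_self (pow_pos (expChar_pos R p) ℓ)]

end

namespace IsIterativeDerivation

section CommRing

variable {R : Type*} [CommRing R] {θ : R →+* PowerSeries R} (hθ : IsIterativeDerivation θ)
include hθ

theorem iterDeriv_iterDeriv (i j : ℕ) (x : R) :
    iterDeriv θ i (iterDeriv θ j x) = ((i + j).choose i : R) * iterDeriv θ (i + j) x := by
  rw [hθ.2, nsmul_eq_mul]

theorem iterDeriv_mul_of_forall {n : ℕ} {c : R}
    (hc : ∀ j, 0 < j → j ≤ n → iterDeriv θ j c = 0) (x : R) :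
    iterDeriv θ n (c * x) = c * iterDeriv θ n x := by
  rw [iterDeriv_mul, sum_eq_single (0, n), hθ.1]
  · intro q hq hq0
    rw [HasAntidiagonal.mem_antidiagonal] at hq
    rw [hc q.1 (Nat.pos_of_ne_zero fun h => hq0 (Prod.ext h (by dsimp only; omega))) (by omega),
      zero_mul]
  · simp

end CommRing

variable {F : Type*} [Field F] {θ : F →+* PowerSeries F} (hθ : IsIterativeDerivation θ)
include hθ

/-- `hθ.constSubfield (p ^ ℓ)` is `F_ℓ`. -/
def constSubfield (n : ℕ) : Subfield F where
  carrier := {x | ∀ j, 0 < j → j < n → iterDeriv θ j x = 0}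
  zero_mem' _ _ _ := iterDeriv_zero_right θ _
  one_mem' _ hj _ := iterDeriv_one_right θ hj.ne'
  add_mem' ha hb j hj hjn := by rw [iterDeriv_add, ha j hj hjn, hb j hj hjn, add_zero]
  neg_mem' {a} ha j hj hjn := by
    rw [iterDeriv_neg, ha j hj hjn, neg_zero]
  mul_mem' ha hb j hj hjn := by
    rw [hθ.iterDeriv_mul_of_forall (fun i hi hij => ha i hi (by omega)), hb j hj hjn, mul_zero]
  inv_mem' a ha j hj hjn := by
    rcases eq_or_ne a 0 with rfl | ha0
    · simp
    · have h := hθ.iterDeriv_mul_of_forall (fun i hi hij => ha i hi (by omega)) a⁻¹ (n := j)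
      rw [mul_inv_cancel₀ ha0, iterDeriv_one_right θ hj.ne', eq_comm] at h
      exact (mul_eq_zero.mp h).resolve_left ha0

theorem iterDeriv_mul_of_mem_of_lt {m n : ℕ} {c : F} (hc : c ∈ hθ.constSubfield m)
    (hnm : n < m) (x : F) : iterDeriv θ n (c * x) = c * iterDeriv θ n x :=
  hθ.iterDeriv_mul_of_forall (fun j hj hjn => hc j hj (by omega)) x

theorem iterDeriv_mul_of_mem {n : ℕ} (hn : 0 < n) {x : F} (hx : x ∈ hθ.constSubfield n)
    (y : F) :
    iterDeriv θ n (x * y) = x * iterDeriv θ n y + y * iterDeriv θ n x := by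
  rw [iterDeriv_mul, sum_eq_add (0, n) (n, 0) (by simp [hn.ne]), hθ.1, hθ.1, mul_comm y]
  · intro q hq hq0
    rw [HasAntidiagonal.mem_antidiagonal] at hq
    rw [hx q.1 (Nat.pos_of_ne_zero fun h => hq0.1 (Prod.ext h (by dsimp only; omega)))
      (Nat.lt_of_le_of_ne (by omega) fun h => hq0.2 (Prod.ext h (by dsimp only; omega))), zero_mul]
  · simp
  · simp

theorem pow_mem_constSubfield (p : ℕ) [ExpChar F p] (ℓ : ℕ) (x : F) :
    x ^ p ^ ℓ ∈ hθ.constSubfield (p ^ ℓ) := by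
  intro j hj hjl
  rw [iterDeriv_pow_expChar_pow, if_neg fun h => (Nat.le_of_dvd hj h).not_gt hjl]

variable (p : ℕ) [Fact p.Prime] [CharP F p] (ℓ : ℕ)

/-- Write `m = p^ℓ a + b` with `0 < b < p^ℓ`: then
`θ^(p^ℓ a) (θ^(b) x) = binom(m, p^ℓ a) θ^(m) x`, and the binomial coefficient is `1` mod `p`. -/
theorem iterDeriv_eq_zero_of_not_dvd {x : F} (hx : x ∈ hθ.constSubfield (p ^ ℓ)) {m : ℕ}
    (hm : ¬ p ^ ℓ ∣ m) : iterDeriv θ m x = 0 := by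
  have hb : 0 < m % p ^ ℓ := Nat.pos_of_ne_zero fun h => hm (Nat.dvd_of_mod_eq_zero h)
  have hbl : m % p ^ ℓ < p ^ ℓ := Nat.mod_lt _ (pow_pos (Fact.out : p.Prime).pos ℓ)
  have hchoose := Choose.choose_pow_mul_add_modEq_one (a := m / p ^ ℓ) hbl
  rw [Nat.div_add_mod] at hchoose
  have h := hθ.iterDeriv_iterDeriv (p ^ ℓ * (m / p ^ ℓ)) (m % p ^ ℓ) x
  rw [hx _ hb hbl, iterDeriv_zero_right, Nat.div_add_mod,
    (CharP.natCast_eq_natCast F p).mpr hchoose, Nat.cast_one, one_mul] at h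
  exact h.symm

theorem iterate_iterDeriv_pow (k : ℕ) (x : F) :
    (iterDeriv θ (p ^ ℓ))^[k] x = k ! * iterDeriv θ (p ^ ℓ * k) x := by
  induction k with
  | zero => simp [hθ.1]
  | succ k ih =>
    have hchoose :=
      Choose.choose_pow_mul_pow_mul_modEq_choose_nat (p := p) (k := ℓ) (a := k + 1) (b := 1)
    rw [mul_one, Nat.choose_one_right] at hchoose
    rw [Function.iterate_succ_apply', ih, iterDeriv_natCast_mul, hθ.iterDeriv_iterDeriv,
      add_comm (p ^ ℓ), ← _root_.mul_add_one (p ^ ℓ) k,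
      (CharP.natCast_eq_natCast F p).mpr hchoose, factorial_succ]
    push_cast
    ring

theorem iterate_iterDeriv_pow_self (x : F) : (iterDeriv θ (p ^ ℓ))^[p] x = 0 := by
  rw [hθ.iterate_iterDeriv_pow, (CharP.cast_eq_zero_iff F p _).mpr
    (dvd_factorial (Fact.out : p.Prime).pos le_rfl), zero_mul]

theorem iterDeriv_mem_constSubfield {x : F} (hx : x ∈ hθ.constSubfield (p ^ ℓ)) :
    iterDeriv θ (p ^ ℓ) x ∈ hθ.constSubfield (p ^ ℓ) := by
  intro j hj hjl
  have hndvd : ¬ p ^ ℓ ∣ j + p ^ ℓ := fun h => by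
    have := Nat.le_of_dvd hj ((Nat.dvd_add_self_right).mp h)
    omega
  rw [hθ.iterDeriv_iterDeriv, hθ.iterDeriv_eq_zero_of_not_dvd p ℓ hx hndvd, mul_zero]

theorem mem_constSubfield_succ_iff {x : F} (hx : x ∈ hθ.constSubfield (p ^ ℓ)) :
    x ∈ hθ.constSubfield (p ^ (ℓ + 1)) ↔ iterDeriv θ (p ^ ℓ) x = 0 := by
  have hp := (Fact.out : p.Prime)
  refine ⟨fun h => h _ (pow_pos hp.pos ℓ) (Nat.pow_lt_pow_succ hp.one_lt),
    fun h j hj hjl => ?_⟩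
  by_cases hdvd : p ^ ℓ ∣ j
  · obtain ⟨a, rfl⟩ := hdvd
    have ha : 0 < a := Nat.pos_of_mul_pos_left hj
    have hap : a < p := by rw [pow_succ] at hjl; exact Nat.lt_of_mul_lt_mul_left hjl
    have hit := hθ.iterate_iterDeriv_pow p ℓ a x
    rw [← Nat.sub_add_cancel ha, Function.iterate_succ_apply, h,
      Function.iterate_fixed (iterDeriv_zero_right θ _), Nat.sub_add_cancel ha, eq_comm] at hit
    exact (mul_eq_zero.mp hit).resolve_left (CharP.natCast_factorial_ne_zero p hap)
  · exact hθ.iterDeriv_eq_zero_of_not_dvd p ℓ hx hdvd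

noncomputable def derivation :
    Derivation ((hθ.constSubfield (p ^ (ℓ + 1))).comap (hθ.constSubfield (p ^ ℓ)).subtype)
      (hθ.constSubfield (p ^ ℓ)) (hθ.constSubfield (p ^ ℓ)) where
  toFun z := ⟨iterDeriv θ (p ^ ℓ) z, hθ.iterDeriv_mem_constSubfield p ℓ z.2⟩
  map_add' _ _ := Subtype.ext (iterDeriv_add θ _ _ _)
  map_smul' c _ := Subtype.ext <|
    hθ.iterDeriv_mul_of_mem_of_lt c.2 (Nat.pow_lt_pow_succ (Fact.out : p.Prime).one_lt) _
  map_one_eq_zero' :=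
    Subtype.ext (iterDeriv_one_right θ (pow_pos (Fact.out : p.Prime).pos ℓ).ne')
  leibniz' y _ :=
    Subtype.ext (hθ.iterDeriv_mul_of_mem (pow_pos (Fact.out : p.Prime).pos ℓ) y.2 _)

theorem coe_iterate_derivation (n : ℕ) (z : hθ.constSubfield (p ^ ℓ)) :
    ((⇑(hθ.derivation p ℓ))^[n] z : F) = (iterDeriv θ (p ^ ℓ))^[n] z :=
  Function.Semiconj.iterate_right (f := Subtype.val) (fun _ => rfl) n z

theorem derivation_pow_eq_zero : (hθ.derivation p ℓ).toLinearMap ^ p = 0 :=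
  LinearMap.ext fun z => Subtype.ext <| by
    rw [Module.End.pow_apply, Derivation.coeFn_coe, hθ.coe_iterate_derivation,
      hθ.iterate_iterDeriv_pow_self]
    rfl

theorem derivation_ne_zero (hnd : iterDeriv θ 1 ≠ 0) : hθ.derivation p ℓ ≠ 0 := by
  obtain ⟨x, hx⟩ := Function.ne_iff.mp hnd
  intro h
  have h' :=
    congrArg Subtype.val (Derivation.congr_fun h ⟨_, hθ.pow_mem_constSubfield p ℓ x⟩)
  exact pow_ne_zero _ hx ((iterDeriv_pow_self θ p ℓ x).symm.trans h')

theorem mem_range_algebraMap_of_derivation_eq_zero {z : hθ.constSubfield (p ^ ℓ)}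
    (hz : hθ.derivation p ℓ z = 0) :
    z ∈ Set.range (algebraMap
      ((hθ.constSubfield (p ^ (ℓ + 1))).comap (hθ.constSubfield (p ^ ℓ)).subtype) _) :=
  ⟨⟨z, (hθ.mem_constSubfield_succ_iff p ℓ z.2).mpr (congrArg Subtype.val hz)⟩, rfl⟩

end IsIterativeDerivation

/-- `θ^(p^ℓ)` restricted to `F_ℓ` is an `F_{ℓ+1}`-linear endomorphism of `F_ℓ`,
nilpotent of nilpotence order exactly `p`, with kernel `F_{ℓ+1}`;
consequently `[F_ℓ : F_{ℓ+1}] = p`. -/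
theorem stmt7 {F : Type*} [Field F] (p : ℕ) [Fact p.Prime] [CharP F p]
    (θ : F →+* PowerSeries F) (hθ : IsIterativeDerivation θ)
    (hnd : iterDeriv θ 1 ≠ 0) (ℓ : ℕ) :
    ∃ K K1 : Subfield F,
      (K : Set F) = {x : F | ∀ j : ℕ, 0 < j → j < p ^ ℓ → iterDeriv θ j x = 0} ∧
      (K1 : Set F) = {x : F | ∀ j : ℕ, 0 < j → j < p ^ (ℓ + 1) → iterDeriv θ j x = 0} ∧
      (∀ x ∈ K, iterDeriv θ (p ^ ℓ) x ∈ K) ∧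
      (∀ c ∈ K1, ∀ x ∈ K, iterDeriv θ (p ^ ℓ) (c * x) = c * iterDeriv θ (p ^ ℓ) x) ∧
      (∀ x ∈ K, (iterDeriv θ (p ^ ℓ))^[p] x = 0) ∧
      (∃ x ∈ K, (iterDeriv θ (p ^ ℓ))^[p - 1] x ≠ 0) ∧
      (∀ x ∈ K, (iterDeriv θ (p ^ ℓ) x = 0 ↔ x ∈ K1)) ∧
      Module.finrank (K1.comap K.subtype) K = p := by
  set D := hθ.derivation p ℓ
  have hD : D ≠ 0 := hθ.derivation_ne_zero p ℓ hnd
  have hnil := hθ.derivation_pow_eq_zero p ℓ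
  have hker := fun z => hθ.mem_range_algebraMap_of_derivation_eq_zero p ℓ (z := z)
  obtain ⟨z, hz⟩ : ∃ z, (D.toLinearMap ^ (p - 1)) z ≠ 0 := by
    by_contra! h
    exact D.pow_sub_one_ne_zero p hD ⟨p, hnil⟩ hker (LinearMap.ext h)
  have hlt : p ^ ℓ < p ^ (ℓ + 1) := Nat.pow_lt_pow_succ (Fact.out : p.Prime).one_lt
  refine ⟨hθ.constSubfield (p ^ ℓ), hθ.constSubfield (p ^ (ℓ + 1)), rfl, rfl,
    fun x hx => hθ.iterDeriv_mem_constSubfield p ℓ hx,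
    fun c hc x _ => hθ.iterDeriv_mul_of_mem_of_lt hc hlt x,
    fun x _ => hθ.iterate_iterDeriv_pow_self p ℓ x, ⟨z, z.2, ?_⟩,
    fun x hx => (hθ.mem_constSubfield_succ_iff p ℓ hx).symm,
    D.finrank_eq_of_pow_eq_zero p hD hnil hker⟩
  rw [Module.End.pow_apply, Derivation.coeFn_coe] at hz
  rwa [← hθ.coe_iterate_derivation p ℓ, Ne, ZeroMemClass.coe_eq_zero]
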